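/- arXiv:2003.14342 — 7 statements merged into one kernel-verified Lean document; each statement's English description precedes it below -/
import Mathlib

section
/- For every fusible number z and every real m with 0 < m ≤ 1, there exists a fusible number in the half-open interval (z + 1 - 2m, z + 1 - m]. -/
/-- The set of fusible numbers. -/
inductive Fusible : ℝ → Prop
  | zero : Fusible 0
  | fuse (x y : ℝ) : Fusible x → Fusible y → |y - x| < 1 → Fusible ((x + y + 1) / 2)

theorem window_aux (n : ℕ) : ∀ z m : ℝ, Fusible z → 0 < m → m ≤ 1 →
    1 / 2 < 2 ^ n * m →
    ∃ w : ℝ, Fusible w ∧ z + 1 - 2 * m < w ∧ w ≤ z + 1 - m := by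
  induction n with
  | zero =>
    intro z m hz hm0 hm1 h
    exact ⟨z, hz, by norm_num at h ⊢; linarith, by linarith⟩
  | succ n ih =>
    intro z m hz hm0 hm1 h
    by_cases hc : 1 / 2 < m
    · exact ⟨z, hz, by linarith, by linarith⟩
    · push_neg at hc
      obtain ⟨x, hx, hx1, hx2⟩ := ih z (2 * m) hz (by linarith) (by linarith)
        (by rw [pow_succ] at h; ring_nf at h ⊢; linarith)
      refine ⟨(x + z + 1) / 2, Fusible.fuse x z hx hz ?_, by linarith, by linarith⟩
      rw [abs_lt]
      constructor <;> linarith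

theorem window_lemma (z m : ℝ) (hz : Fusible z) (hm0 : 0 < m) (hm1 : m ≤ 1) :
    ∃ w : ℝ, Fusible w ∧ z + 1 - 2 * m < w ∧ w ≤ z + 1 - m := by
  obtain ⟨n, hn⟩ := pow_unbounded_of_one_lt (1 / (2 * m)) (by norm_num : (1:ℝ) < 2)
  exact window_aux n z m hz hm0 hm1 (by
    rw [div_lt_iff₀ (by linarith)] at hn
    nlinarith)
end

section
/- The set of fusible numbers, with the order inherited from ℝ, is well-ordered: every nonempty subset of F has a least element. -/
open Pointwise

lemma fusible_nonneg {z : ℝ} (h : Fusible z) : 0 ≤ z := by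
  induction h with
  | zero => norm_num
  | fuse x y hx hy hxy ihx ihy => linarith

lemma fusible_pos_ge {z : ℝ} (h : Fusible z) (hz : z ≠ 0) : 1/2 ≤ z := by
  cases h with
  | zero => exact absurd rfl hz
  | fuse x y hx hy hxy =>
      have h1 := fusible_nonneg hx
      have h2 := fusible_nonneg hy
      linarith

lemma fuse_wlog {z : ℝ} (hz : Fusible z) (h0 : z ≠ 0) :
    ∃ x y, Fusible x ∧ Fusible y ∧ x ≤ y ∧ y - x < 1 ∧ z = (x + y + 1) / 2 := by
  cases hz with
  | zero => exact absurd rfl h0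
  | fuse x y hx hy hxy =>
      rw [abs_lt] at hxy
      rcases le_total x y with h | h
      · exact ⟨x, y, hx, hy, h, hxy.2, rfl⟩
      · exact ⟨y, x, hy, hx, h, by linarith [hxy.1], by ring⟩

lemma fusible_key (r : ℝ) : ({z : ℝ | Fusible z} ∩ Set.Iio r).IsWF := by
  by_contra hcon0
  set B := {r : ℝ | ¬ ({z : ℝ | Fusible z} ∩ Set.Iio r).IsWF} with hBdef
  have hBne : B.Nonempty := ⟨r, hcon0⟩
  have hsmall : ∀ r : ℝ, r ≤ 1/2 → ({z : ℝ | Fusible z} ∩ Set.Iio r).IsWF := by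
    intro r hr
    apply (Set.finite_singleton (0 : ℝ)).isWF.mono
    rintro z ⟨hz, hzr⟩
    by_contra h0
    have := fusible_pos_ge hz (by simpa using h0)
    simp only [Set.mem_Iio] at hzr
    linarith
  have hBbdd : BddBelow B := by
    refine ⟨1/2, fun r hr => ?_⟩
    by_contra h
    exact hr (hsmall r (by linarith [not_le.mp h]))
  set lam := sInf B with hlam
  have hlam_half : 1/2 ≤ lam := le_csInf hBne (by
    intro r hr
    by_contra h
    exact hr (hsmall r (by linarith [not_le.mp h])))
  set A := {z : ℝ | Fusible z} ∩ Set.Iio lam with hAdef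
  have hA : A.IsWF := by
    rw [Set.isWF_iff_no_descending_seq]
    intro f hf hmem
    have hf0 : f 0 < lam := (hmem 0).2
    set r' := (f 0 + lam) / 2 with hr'
    have hr'lt : r' < lam := by simp [hr']; linarith
    have hP : ({z : ℝ | Fusible z} ∩ Set.Iio r').IsWF := by
      by_contra h
      exact absurd (csInf_le hBbdd h) (not_le.mpr hr'lt)
    rw [Set.isWF_iff_no_descending_seq] at hP
    refine hP f hf fun n => ⟨(hmem n).1, ?_⟩
    have h1 : f n ≤ f 0 := hf.antitone (Nat.zero_le n)
    show f n < (f 0 + lam) / 2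
    linarith
  -- choose epsilon
  obtain ⟨ε, hε0, hε14, hεT⟩ :
      ∃ ε : ℝ, 0 < ε ∧ ε ≤ 1/4 ∧ ∀ a ∈ A, lam - 1 < a → lam - 1 + 2*ε < a := by
    by_cases hT : (A ∩ Set.Ioi (lam - 1)).Nonempty
    · have hTwf : (A ∩ Set.Ioi (lam - 1)).IsWF := hA.mono Set.inter_subset_left
      set m := hTwf.min hT with hm
      have hmmem := hTwf.min_mem hT
      have hmgt : lam - 1 < m := hmmem.2
      refine ⟨min (1/4) ((m - (lam - 1)) / 3), lt_min (by norm_num) (by linarith), min_le_left _ _, ?_⟩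
      intro a ha hagt
      have hma : m ≤ a := hTwf.min_le hT ⟨ha, hagt⟩
      have : min (1/4) ((m - (lam - 1)) / 3) ≤ (m - (lam - 1)) / 3 := min_le_right _ _
      linarith
    · refine ⟨1/4, by norm_num, le_refl _, ?_⟩
      intro a ha hagt
      exact absurd ⟨ha, hagt⟩ (fun h => hT ⟨a, h⟩)
  -- the set D of fusions of pairs from A
  set D := (fun t : ℝ => (t + 1) / 2) '' (A + A) with hDdef
  have hD : D.IsWF := by
    have h1 : (A + A).IsPWO := hA.isPWO.add hA.isPWO
    have h2 : Monotone (fun t : ℝ => (t + 1) / 2) := by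
      intro a b hab
      dsimp
      linarith
    exact (h1.image_of_monotone h2).isWF
  have hsub : {z : ℝ | Fusible z} ∩ Set.Iio (lam + ε) ⊆ A ∪ D := by
    rintro z ⟨hzF, hzlt⟩
    simp only [Set.mem_Iio] at hzlt
    by_cases hzA : z < lam
    · exact Or.inl ⟨hzF, hzA⟩
    push_neg at hzA
    have hz0 : z ≠ 0 := by intro h; rw [h] at hzA; linarith
    obtain ⟨x, y, hx, hy, hxley, hyxlt, hzeq⟩ := fuse_wlog hzF hz0
    by_cases hyl : y < lam
    · refine Or.inr ⟨x + y, Set.add_mem_add ⟨hx, lt_of_le_of_lt hxley hyl⟩ ⟨hy, hyl⟩, ?_⟩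
      dsimp
      linarith
    · push_neg at hyl
      exfalso
      have hxup : x < lam - 1 + 2*ε := by
        have : x = 2*z - 1 - y := by linarith
        rw [this]; linarith
      have hxgt : lam - 1 < x := by
        have hylt : y < z := by linarith
        linarith
      have hxA : x ∈ A := ⟨hx, Set.mem_Iio.mpr (by linarith)⟩
      have := hεT x hxA hxgt
      linarith
  have hfinal : ({z : ℝ | Fusible z} ∩ Set.Iio (lam + ε)).IsWF := (hA.union hD).mono hsub
  have : lam + ε ≤ lam := by
    rw [hlam]
    apply le_csInf hBne
    intro r' hr'
    by_contra h
    push_neg at h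
    exact hr' (hfinal.mono (Set.inter_subset_inter_right _ (Set.Iio_subset_Iio h.le)))
  linarith

theorem fusible_wellOrdered (S : Set ℝ) (hS : ∀ z ∈ S, Fusible z) (hne : S.Nonempty) :
    ∃ a ∈ S, ∀ b ∈ S, a ≤ b := by
  obtain ⟨s₀, hs₀⟩ := hne
  set S' := S ∩ Set.Iio (s₀ + 1) with hS'def
  have hwf : S'.IsWF := (fusible_key (s₀ + 1)).mono (fun z hz => ⟨hS z hz.1, hz.2⟩)
  have hne' : S'.Nonempty := ⟨s₀, hs₀, Set.mem_Iio.mpr (by linarith)⟩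
  refine ⟨hwf.min hne', (hwf.min_mem hne').1, ?_⟩
  intro b hb
  by_cases hb' : b < s₀ + 1
  · exact hwf.min_le hne' ⟨hb, hb'⟩
  · have h1 : hwf.min hne' ≤ s₀ := hwf.min_le hne' ⟨hs₀, Set.mem_Iio.mpr (by linarith)⟩
    push_neg at hb'
    linarith
end

section
/- The set of fusible numbers is topologically closed in ℝ: if (z_n) is a strictly increasing sequence of fusible numbers converging to z ∈ ℝ, then z is fusible. -/
/-!
A fusible number `x > 0` is `(a + b + 1) / 2` with fusible `a ≤ b < a + 1`, so `a ≤ x - 1/2`.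
We prove, by induction along the closure of the fusible numbers, that each of its points `m` is
fusible and is not a limit of fusible numbers from the right. The induction is legitimate
because, if the claim failed, the infimum of the counterexamples would satisfy it and yet be
approached by counterexamples from the right.

If fusible `x n → m`, along a subsequence the decompositions converge, `a n → a`, `b n → b`,
and `m = (a + b + 1) / 2` with `a ≤ m - 1/2`. Approaching `m` from the left, `b ≤ m`; so either
`a` and `b` are fusible by induction and so is `m`, or `b = m` and `m = a + 1`. Approaching `m`
from the right, `a` is not a limit from the right, so eventually `a n ≤ a`; then `b n > b`, so
`b ≥ m` by induction, which forces `a ≤ m - 1 < a n`.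
-/

open Filter Topology Set

section Topology

variable {α : Type*} [TopologicalSpace α]

theorem frequently_nhdsWithin_of_frequently_mem_closure {U s : Set α} {a : α} (hU : IsOpen U)
    (h : ∃ᶠ x in 𝓝[U] a, x ∈ closure s) : ∃ᶠ x in 𝓝[U] a, x ∈ s := by
  rw [frequently_nhdsWithin_iff] at h ⊢
  have hsub : closure s ∩ U ⊆ closure (s ∩ U) := by
    simpa only [inter_comm U] using hU.inter_closure
  exact mem_closure_iff_frequently.1 (closure_minimal hsub isClosed_closure h.mem_closure)

variable [LinearOrder α]

theorem mem_or_frequently_nhdsLT_or_frequently_nhdsGT {s : Set α} {a : α} (h : a ∈ closure s) :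
    a ∈ s ∨ (∃ᶠ x in 𝓝[<] a, x ∈ s) ∨ ∃ᶠ x in 𝓝[>] a, x ∈ s := by
  rw [mem_closure_iff_frequently, ← nhdsNE_sup_pure, ← nhdsLT_sup_nhdsGT, frequently_sup,
    frequently_sup, frequently_pure] at h
  tauto

theorem Filter.Tendsto.eventually_le_of_not_frequently_nhdsGT {ι : Type*} {l : Filter ι}
    {P : α → Prop} {c : ι → α} {c₀ : α} (hc : Tendsto c l (𝓝 c₀)) (hP : ∀ i, P (c i))
    (h : ¬∃ᶠ x in 𝓝[>] c₀, P x) : ∀ᶠ i in l, c i ≤ c₀ := by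
  rw [not_frequently, eventually_nhdsWithin_iff] at h
  filter_upwards [hc h] with i hi
  exact not_lt.1 fun hlt => hi hlt (hP i)

theorem IsGLB.frequently_nhdsGT_mem [OrderTopology α] {s : Set α} {a : α} (ha : IsGLB s a)
    (hs : s.Nonempty) (has : a ∉ s) : ∃ᶠ x in 𝓝[>] a, x ∈ s := by
  have h := ha.frequently_mem hs
  rw [frequently_nhdsWithin_iff] at h ⊢
  exact h.mono fun x ⟨hxs, hax⟩ => ⟨hxs, lt_of_le_of_ne hax fun hax => has (hax ▸ hxs)⟩

end Topology

theorem IsClosed.forall_mem_of_lt_induction {α : Type*} [ConditionallyCompleteLinearOrder α]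
    [TopologicalSpace α] [OrderTopology α] {s : Set α} {P : α → Prop} (hs : IsClosed s)
    (hbdd : BddBelow s) (hP : ∀ m, P m → ¬∃ᶠ x in 𝓝[>] m, x ∈ s)
    (step : ∀ m ∈ s, (∀ p ∈ s, p < m → P p) → P m) : ∀ m ∈ s, P m := by
  by_contra! hbad
  set B := {m ∈ s | ¬P m}
  have hBne : B.Nonempty := hbad
  have hBbdd : BddBelow B := hbdd.mono (sep_subset _ _)
  have hinf_mem : sInf B ∈ s :=
    hs.closure_subset_iff.2 (sep_subset _ _) (csInf_mem_closure hBne hBbdd)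
  have hinf : P (sInf B) := step _ hinf_mem fun p hp hlt =>
    not_not.1 fun hPp => notMem_of_lt_csInf hlt hBbdd ⟨hp, hPp⟩
  exact hP _ hinf <| ((isGLB_csInf hBne hBbdd).frequently_nhdsGT_mem hBne
    fun h => h.2 hinf).mono fun _ hx => hx.1

namespace Fusible

theorem nonneg {x : ℝ} (hx : Fusible x) : 0 ≤ x := by
  induction hx with
  | zero => exact le_rfl
  | fuse x y _ _ _ hx hy => linarith

theorem add_one {x : ℝ} (hx : Fusible x) : Fusible (x + 1) := by
  have half : Fusible (x + 1 / 2) := by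
    convert fuse x x hx hx (by simp) using 1; ring
  convert fuse _ _ half half (by simp) using 1; ring

theorem exists_eq_fuse {x : ℝ} (hx : Fusible x) (h0 : x ≠ 0) :
    ∃ a b, Fusible a ∧ Fusible b ∧ a ≤ b ∧ b < a + 1 ∧ x = (a + b + 1) / 2 := by
  cases hx with
  | zero => exact absurd rfl h0
  | fuse a b ha hb hab =>
    rcases le_total a b with h | h
    · exact ⟨a, b, ha, hb, h, by linarith [abs_lt.1 hab], rfl⟩
    · exact ⟨b, a, hb, ha, h, by linarith [abs_lt.1 hab], by ring⟩

end Fusible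

theorem closure_setOf_fusible_subset : closure {x : ℝ | Fusible x} ⊆ Ici 0 :=
  closure_minimal (fun _ hx => Fusible.nonneg hx) isClosed_Ici

theorem exists_subseq_tendsto_fuse {x : ℕ → ℝ} {m : ℝ} (hx : Tendsto x atTop (𝓝 m))
    (hF : ∀ n, Fusible (x n)) (h0 : ∀ n, x n ≠ 0) :
    ∃ φ : ℕ → ℕ, ∃ a b : ℕ → ℝ, ∃ a₀ b₀ : ℝ,
      (∀ n, Fusible (a n)) ∧ (∀ n, Fusible (b n)) ∧ (∀ n, b n < a n + 1) ∧
      (∀ n, x (φ n) = (a n + b n + 1) / 2) ∧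
      Tendsto a atTop (𝓝 a₀) ∧ Tendsto b atTop (𝓝 b₀) ∧ a₀ ≤ b₀ ∧ m = (a₀ + b₀ + 1) / 2 := by
  choose a b ha hb hab hba hx_eq using fun n => (hF n).exists_eq_fuse (h0 n)
  obtain ⟨C, hC⟩ := hx.bddAbove_range
  have ha_mem : ∀ n, a n ∈ Icc 0 C := fun n =>
    ⟨(ha n).nonneg, by linarith [hC (mem_range_self n), hab n, hx_eq n]⟩
  obtain ⟨a₀, -, φ, hφ, ha₀⟩ := tendsto_subseq_of_bounded (Metric.isBounded_Icc 0 C) ha_mem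
  have hb₀ : Tendsto (b ∘ φ) atTop (𝓝 (2 * m - 1 - a₀)) := by
    have hb_eq : b ∘ φ = fun n => 2 * x (φ n) - 1 - a (φ n) :=
      funext fun n => by simp only [Function.comp, hx_eq]; ring
    rw [hb_eq]
    exact (((hx.comp hφ.tendsto_atTop).const_mul 2).sub_const 1).sub ha₀
  refine ⟨φ, a ∘ φ, b ∘ φ, a₀, 2 * m - 1 - a₀, fun n => ha _, fun n => hb _, fun n => hba _,
    fun n => hx_eq _, ha₀, hb₀, ?_, by ring⟩
  exact le_of_tendsto_of_tendsto' ha₀ hb₀ fun n => hab (φ n)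

theorem not_frequently_fusible_nhdsGT {m : ℝ} (hm : 0 ≤ m)
    (ih : ∀ p ∈ closure {x | Fusible x}, p < m → ¬∃ᶠ x in 𝓝[>] p, Fusible x) :
    ¬∃ᶠ x in 𝓝[>] m, Fusible x := by
  intro h
  obtain ⟨x, hxm, hx⟩ := frequently_iff_seq_forall.1
    (h.and_eventually (Ioo_mem_nhdsGT (by linarith : m < m + 1 / 2)))
  obtain ⟨φ, a, b, a₀, b₀, ha, hb, hba, hx_eq, ha₀, hb₀, hab₀, hm_eq⟩ :=
    exists_subseq_tendsto_fuse (tendsto_nhds_of_tendsto_nhdsWithin hxm) (fun n => (hx n).1)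
      fun n => (hm.trans_lt (hx n).2.1).ne'
  have ha_le : ∀ᶠ n in atTop, a n ≤ a₀ :=
    ha₀.eventually_le_of_not_frequently_nhdsGT ha
      (ih a₀ (mem_closure_of_tendsto ha₀ (.of_forall ha)) (by linarith))
  have hb_gt : Tendsto b atTop (𝓝[>] b₀) :=
    tendsto_nhdsWithin_iff.2 ⟨hb₀, ha_le.mono fun n hn => by
      show b₀ < b n
      linarith [hx_eq n, (hx (φ n)).2.1]⟩
  have hmb₀ : m ≤ b₀ := not_lt.1 fun hlt =>
    ih b₀ (mem_closure_of_tendsto hb₀ (.of_forall hb)) hlt (hb_gt.frequently (.of_forall hb))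
  obtain ⟨n, hn⟩ := ha_le.exists
  linarith [hba n, hx_eq n, (hx (φ n)).2.1]

theorem fusible_of_frequently_nhdsLT {m : ℝ}
    (ih : ∀ p ∈ closure {x | Fusible x}, p < m → Fusible p) (h : ∃ᶠ x in 𝓝[<] m, Fusible x) :
    Fusible m := by
  obtain ⟨x₁, hx₁, hx₁m⟩ := (h.and_eventually self_mem_nhdsWithin).exists
  obtain ⟨x, hxm, hx⟩ := frequently_iff_seq_forall.1
    (h.and_eventually (Ioo_mem_nhdsLT (hx₁.nonneg.trans_lt hx₁m)))
  obtain ⟨φ, a, b, a₀, b₀, ha, hb, hba, hx_eq, ha₀, hb₀, hab₀, hm_eq⟩ :=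
    exists_subseq_tendsto_fuse (tendsto_nhds_of_tendsto_nhdsWithin hxm) (fun n => (hx n).1)
      fun n => (hx n).2.1.ne'
  have ha₀F : Fusible a₀ := ih a₀ (mem_closure_of_tendsto ha₀ (.of_forall ha)) (by linarith)
  have hb₀m : b₀ ≤ m := le_of_tendsto' hb₀ fun n => by
    linarith [hba n, hx_eq n, (hx (φ n)).2.2]
  rcases hb₀m.lt_or_eq with hlt | heq
  · have hb₀F := ih b₀ (mem_closure_of_tendsto hb₀ (.of_forall hb)) hlt
    rw [hm_eq]
    exact .fuse a₀ b₀ ha₀F hb₀F (abs_lt.2 ⟨by linarith, by linarith⟩)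
  · rw [show m = a₀ + 1 by linarith]
    exact ha₀F.add_one

theorem fusible_and_not_frequently_nhdsGT_of_mem_closure {m : ℝ}
    (hm : m ∈ closure {x | Fusible x}) : Fusible m ∧ ¬∃ᶠ x in 𝓝[>] m, Fusible x := by
  refine isClosed_closure.forall_mem_of_lt_induction
    (P := fun m => Fusible m ∧ ¬∃ᶠ x in 𝓝[>] m, Fusible x)
    ⟨0, fun _ hx => closure_setOf_fusible_subset hx⟩
    (fun m hm hacc => hm.2 (frequently_nhdsWithin_of_frequently_mem_closure isOpen_Ioi hacc))
    (fun m hm ih => ?_) m hm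
  have hright := not_frequently_fusible_nhdsGT (closure_setOf_fusible_subset hm)
    fun p hp hlt => (ih p hp hlt).2
  refine ⟨?_, hright⟩
  rcases mem_or_frequently_nhdsLT_or_frequently_nhdsGT hm with h | h | h
  · exact h
  · exact fusible_of_frequently_nhdsLT (fun p hp hlt => (ih p hp hlt).1) h
  · exact absurd h hright

theorem isClosed_setOf_fusible : IsClosed {x : ℝ | Fusible x} :=
  closure_subset_iff_isClosed.1 fun _ hm =>
    (fusible_and_not_frequently_nhdsGT_of_mem_closure hm).1

theorem fusible_closed_general (u : ℕ → ℝ) (z : ℝ)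
    (hfus : ∀ n, Fusible (u n))
    (hlim : Filter.Tendsto u Filter.atTop (nhds z)) :
    Fusible z :=
  isClosed_setOf_fusible.mem_of_tendsto hlim (.of_forall hfus)

theorem fusible_closed (u : ℕ → ℝ) (z : ℝ) (hmono : StrictMono u)
    (hfus : ∀ n, Fusible (u n))
    (hlim : Filter.Tendsto u Filter.atTop (nhds z)) :
    Fusible z :=
  fusible_closed_general u z hfus hlim
end

section
/- If T is a representation of a fusible number z with height n, then z + 2^(-(n+1)) is a fusible number, and moreover it has a representation of height n + 1. -/
/-- Full binary trees, used as representations of fusible numbers. -/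
inductive RepTree where
  | leaf : RepTree
  | node (l r : RepTree) : RepTree

/-- The value of a representation: leaves are `0`, internal nodes fuse their children. -/
noncomputable def RepTree.val : RepTree → ℝ
  | .leaf => 0
  | .node l r => (l.val + r.val + 1) / 2

/-- Validity of a representation: at every internal node, the children differ by less than 1. -/
def RepTree.Valid : RepTree → Prop
  | .leaf => True
  | .node l r => l.Valid ∧ r.Valid ∧ |r.val - l.val| < 1

/-- The height of a representation: length of the longest root-to-leaf path. -/
def RepTree.height : RepTree → ℕ
  | .leaf => 0
  | .node l r => max l.height r.height + 1

/-- `IsExp r n` means that the dyadic rational `r` has exponent `n`, i.e. `n` is the least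
natural number such that `r = p / 2 ^ n` for an integer `p` (so that `p` is odd when `n ≥ 1`). -/
def IsExp (r : ℝ) (n : ℕ) : Prop :=
  (∃ p : ℤ, r = (p : ℝ) / 2 ^ n) ∧ ∀ m : ℕ, m < n → ¬ ∃ p : ℤ, r = (p : ℝ) / 2 ^ m

lemma fus_of_valid (T : RepTree) (hT : T.Valid) : Fusible T.val := by
  induction T with
  | leaf => exact Fusible.zero
  | node l r ihl ihr =>
    obtain ⟨hl, hr, hlt⟩ := hT
    exact Fusible.fuse _ _ (ihl hl) (ihr hr) hlt

lemma dyadic (T : RepTree) : ∀ k : ℕ, T.height ≤ k → ∃ p : ℤ, T.val * 2 ^ k = p := by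
  induction T with
  | leaf => intro k _; exact ⟨0, by simp [RepTree.val]⟩
  | node l r ihl ihr =>
    intro k hk
    cases k with
    | zero => exact absurd hk (by simp [RepTree.height])
    | succ k =>
    have hk' : max l.height r.height ≤ k := Nat.succ_le_succ_iff.mp hk
    obtain ⟨pl, hpl⟩ := ihl k (le_trans (le_max_left _ _) hk')
    obtain ⟨pr, hpr⟩ := ihr k (le_trans (le_max_right _ _) hk')
    refine ⟨pl + pr + 2 ^ k, ?_⟩
    have : RepTree.val (.node l r) * 2 ^ (k + 1)
        = l.val * 2 ^ k + r.val * 2 ^ k + 2 ^ k := by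
      simp only [RepTree.val]; ring
    rw [this, hpl, hpr]; push_cast; ring

lemma gap_le {a b : ℝ} {k : ℕ} (pa pb : ℤ) (ha : a * 2 ^ k = pa) (hb : b * 2 ^ k = pb)
    (h : a - b < 1) : a - b ≤ 1 - 1 / 2 ^ k := by
  have h2 : (0:ℝ) < 2 ^ k := by positivity
  have h3 : ((pa - pb : ℤ) : ℝ) < 2 ^ k := by push_cast; nlinarith
  have h4 : (pa - pb : ℤ) < 2 ^ k := by exact_mod_cast h3
  have h5 : ((pa - pb : ℤ) : ℝ) ≤ 2 ^ k - 1 := by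
    have : (pa - pb : ℤ) ≤ 2 ^ k - 1 := by omega
    calc ((pa - pb : ℤ) : ℝ) ≤ ((2 ^ k - 1 : ℤ) : ℝ) := by exact_mod_cast this
    _ = 2 ^ k - 1 := by push_cast; ring
  have h6 : (a - b) * 2 ^ k ≤ 2 ^ k - 1 := by push_cast at h5 ⊢; nlinarith
  have heq : 1 - 1 / 2 ^ k = ((2:ℝ) ^ k - 1) / 2 ^ k := by field_simp
  rw [heq, le_div_iff₀ h2]
  exact h6

theorem fusible_forward (T : RepTree) (hT : T.Valid) (n : ℕ) (hn : T.height = n) :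
    Fusible (T.val + 1 / 2 ^ (n + 1)) ∧
    ∃ T' : RepTree, T'.Valid ∧ T'.val = T.val + 1 / 2 ^ (n + 1) ∧ T'.height = n + 1 := by
  subst hn
  revert hT
  induction T with
  | leaf =>
    intro _
    constructor
    · have h : RepTree.val RepTree.leaf + 1 / 2 ^ (RepTree.height RepTree.leaf + 1)
          = ((0:ℝ) + 0 + 1) / 2 := by
        simp [RepTree.val, RepTree.height]
      rw [h]
      exact Fusible.fuse 0 0 Fusible.zero Fusible.zero (by norm_num)
    · refine ⟨.node .leaf .leaf, ⟨trivial, trivial, by simp [RepTree.val]⟩, ?_, ?_⟩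
      · simp [RepTree.val, RepTree.height]
      · simp [RepTree.height]
  | node l r ihl ihr =>
    intro hT
    obtain ⟨hvl, hvr, hlt⟩ := hT
    rw [abs_lt] at hlt
    rcases le_total l.height r.height with hcase | hcase
    · -- right child has max height
      set m := r.height with hm
      have hmax : max l.height r.height = m := max_eq_right hcase
      obtain ⟨hfus, T', hT'v, hT'val, hT'h⟩ := ihr hvr
      obtain ⟨pl, hpl⟩ := dyadic l m hcase
      obtain ⟨pr, hpr⟩ := dyadic r m le_rfl
      have hgap : r.val - l.val ≤ 1 - 1 / 2 ^ m := gap_le pr pl hpr hpl hlt.2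
      have hpos : (0:ℝ) < 1 / 2 ^ (m + 1) := by positivity
      have hlt2 : (1:ℝ) / 2 ^ (m + 1) < 1 / 2 ^ m := by
        have h1 : (0:ℝ) < 2 ^ m := by positivity
        rw [pow_succ, div_lt_div_iff₀ (by positivity) h1]
        nlinarith
      have habs : |(r.val + 1 / 2 ^ (m + 1)) - l.val| < 1 := by
        rw [abs_lt]; constructor <;> [linarith [hlt.1]; linarith [hlt.2]]
      have hheight : (RepTree.node l r).height = m + 1 := by
        simp [RepTree.height, hmax]
      have hvaleq : (RepTree.node l r).val + 1 / 2 ^ ((RepTree.node l r).height + 1)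
          = (l.val + (r.val + 1 / 2 ^ (m + 1)) + 1) / 2 := by
        rw [hheight]; simp only [RepTree.val]
        rw [pow_succ]; field_simp; ring
      constructor
      · rw [hvaleq]
        exact Fusible.fuse _ _ (fus_of_valid l hvl) hfus (by rw [hT'val] at *; exact habs)
      · refine ⟨.node l T', ⟨hvl, hT'v, by rw [hT'val]; exact habs⟩, ?_, ?_⟩
        · rw [hvaleq]; simp only [RepTree.val, hT'val]
        · simp only [RepTree.height, hT'h]
          omega
    · -- left child has max height
      set m := l.height with hm
      have hmax : max l.height r.height = m := max_eq_left hcase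
      obtain ⟨hfus, T', hT'v, hT'val, hT'h⟩ := ihl hvl
      obtain ⟨pl, hpl⟩ := dyadic l m le_rfl
      obtain ⟨pr, hpr⟩ := dyadic r m hcase
      have hgap : l.val - r.val ≤ 1 - 1 / 2 ^ m := gap_le pl pr hpl hpr (by linarith [hlt.1])
      have hpos : (0:ℝ) < 1 / 2 ^ (m + 1) := by positivity
      have hlt2 : (1:ℝ) / 2 ^ (m + 1) < 1 / 2 ^ m := by
        have h1 : (0:ℝ) < 2 ^ m := by positivity
        rw [pow_succ, div_lt_div_iff₀ (by positivity) h1]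
        nlinarith
      have habs : |r.val - (l.val + 1 / 2 ^ (m + 1))| < 1 := by
        rw [abs_lt]; constructor <;> [linarith [hlt.1]; linarith [hlt.2]]
      have hheight : (RepTree.node l r).height = m + 1 := by
        simp [RepTree.height, hmax]
      have hvaleq : (RepTree.node l r).val + 1 / 2 ^ ((RepTree.node l r).height + 1)
          = ((l.val + 1 / 2 ^ (m + 1)) + r.val + 1) / 2 := by
        rw [hheight]; simp only [RepTree.val]
        rw [pow_succ]; field_simp; ring
      constructor
      · rw [hvaleq]
        exact Fusible.fuse _ _ hfus (fus_of_valid r hvr) (by rw [hT'val] at *; exact habs)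
      · refine ⟨.node T' r, ⟨hT'v, hvr, by rw [hT'val]; exact habs⟩, ?_, ?_⟩
        · rw [hvaleq]; simp only [RepTree.val, hT'val]
        · simp only [RepTree.height, hT'h]
          omega
end

section
/- Every fusible number z has a maximum-height representation; i.e., the set of heights of representations of z is finite (bounded above). -/
/-!
The fusible numbers are well-ordered. Otherwise some point is approached from the right by
fusible numbers, and the set of such points contains its infimum `m`. Write fusible
`zₙ ↓ m` as `zₙ = (xₙ + yₙ + 1) / 2` with `xₙ ≤ yₙ < zₙ` and pass to a subsequence with
`yₙ → b`, so `xₙ → a = 2m - 1 - b ≤ m - 1/2`. Since `xₙ + yₙ = 2zₙ - 1 > a + b`, infinitely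
often `xₙ > a` or `yₙ > b`; in the second case `b ≤ m` is approached from the right, so
`b = m` and `a = m - 1 < zₙ - 1 < xₙ`. Either way `a < m` is approached from the right,
a contradiction.

For fixed `z`, the summands `x` in fusions `z = x ∼ y` then form a finite set: they are
well-ordered, and so is their image under the order-reversing involution `x ↦ 2z - 1 - x`.
Well-founded induction on `z` now bounds the heights of representations of `z`, since the
subtrees of a representation represent such summands, all smaller than `z`.
-/

open Filter Topology Set

namespace Fusible

lemma nonneg_s10 {z : ℝ} (hz : Fusible z) : 0 ≤ z := by
  induction hz with
  | zero => exact le_rfl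
  | fuse x y _ _ _ hx hy => linarith

lemma exists_ordered_fuse {z : ℝ} (hz : Fusible z) (hpos : 0 < z) :
    ∃ x y, Fusible x ∧ Fusible y ∧ x ≤ y ∧ y - x < 1 ∧ z = (x + y + 1) / 2 := by
  cases hz with
  | zero => exact absurd hpos (lt_irrefl 0)
  | fuse x y hx hy hxy =>
    rw [abs_sub_lt_iff] at hxy
    rcases le_total x y with h | h
    · exact ⟨x, y, hx, hy, h, hxy.1, rfl⟩
    · exact ⟨y, x, hy, hx, h, hxy.2, by ring⟩

end Fusible

def fusibleRightLimits : Set ℝ := {ℓ | ∃ᶠ v in 𝓝[>] ℓ, Fusible v}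

lemma mem_fusibleRightLimits_of_tendsto {u : ℕ → ℝ} {c : ℝ} (hu : Tendsto u atTop (𝓝 c))
    (hF : ∀ n, Fusible (u n)) (hgt : ∃ᶠ n in atTop, c < u n) : c ∈ fusibleRightLimits := by
  obtain ⟨φ, hφ, hφgt⟩ := extraction_of_frequently_atTop hgt
  have hφu : Tendsto (u ∘ φ) atTop (𝓝[>] c) :=
    tendsto_nhdsWithin_iff.2 ⟨hu.comp hφ.tendsto_atTop, Eventually.of_forall hφgt⟩
  exact hφu.frequently (Frequently.of_forall fun n => hF (φ n))

lemma nonneg_of_mem_fusibleRightLimits {ℓ : ℝ} (hℓ : ℓ ∈ fusibleRightLimits) :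
    0 ≤ ℓ := by
  by_contra! hneg
  obtain ⟨v, hv, hv0⟩ := (Frequently.and_eventually hℓ
    ((eventually_lt_nhds hneg).filter_mono nhdsWithin_le_nhds)).exists
  linarith [hv.nonneg_s10]

lemma sInf_mem_fusibleRightLimits (hne : fusibleRightLimits.Nonempty) :
    sInf fusibleRightLimits ∈ fusibleRightLimits := by
  refine (nhdsGT_basis _).frequently_iff.2 fun u hu => ?_
  obtain ⟨ℓ, hℓ, hℓu⟩ := exists_lt_of_csInf_lt hne hu
  obtain ⟨v, hv, hvF⟩ := (nhdsGT_basis ℓ).frequently_iff.1 hℓ u hℓu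
  have hmℓ : sInf fusibleRightLimits ≤ ℓ :=
    csInf_le ⟨0, fun _ => nonneg_of_mem_fusibleRightLimits⟩ hℓ
  exact ⟨v, ⟨hmℓ.trans_lt hv.1, hv.2⟩, hvF⟩

lemma exists_seq_tendsto_of_mem_fusibleRightLimits {m : ℝ} (hm : m ∈ fusibleRightLimits) :
    ∃ z : ℕ → ℝ, Tendsto z atTop (𝓝 m) ∧
      ∀ n, Fusible (z n) ∧ z n ∈ Ioo m (m + 1) := by
  obtain ⟨z, hz, hzF⟩ :=
    exists_seq_forall_of_frequently (hm.and_eventually (Ioo_mem_nhdsGT (lt_add_one m)))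
  exact ⟨z, hz.mono_right nhdsWithin_le_nhds, hzF⟩

lemma not_isLeast_fusibleRightLimits (m : ℝ) : ¬ IsLeast fusibleRightLimits m := by
  rintro ⟨hm, hleast⟩
  obtain ⟨z, hz, hzF⟩ := exists_seq_tendsto_of_mem_fusibleRightLimits hm
  choose x y hxF hyF hxy hyx hzxy using fun n =>
    (hzF n).1.exists_ordered_fuse ((nonneg_of_mem_fusibleRightLimits hm).trans_lt (hzF n).2.1)
  have hyz : ∀ n, y n < z n := fun n => by linarith [hyx n, hzxy n]
  have hxz : ∀ n, z n - 1 < x n := fun n => by linarith [hyz n, hzxy n]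
  obtain ⟨b, -, φ, hφ, hyb⟩ := tendsto_subseq_of_bounded (Metric.isBounded_Icc 0 (m + 1))
    (x := y) fun n => ⟨(hxF n).nonneg_s10.trans (hxy n), ((hyz n).trans (hzF n).2.2).le⟩
  have hzφ := hz.comp hφ.tendsto_atTop
  set a := 2 * m - 1 - b
  have hxa : Tendsto (x ∘ φ) atTop (𝓝 a) :=
    (((hzφ.const_mul 2).sub_const 1).sub hyb).congr fun n => by
      simp only [Function.comp_apply, hzxy]; ring
  have hbm : b ≤ m := le_of_tendsto_of_tendsto' hyb hzφ fun n => (hyz (φ n)).le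
  have ham : a < m := by
    linarith [le_of_tendsto_of_tendsto' hxa hyb fun n => hxy (φ n)]
  have hsplit : (∃ᶠ n in atTop, a < x (φ n)) ∨ ∃ᶠ n in atTop, b < y (φ n) := by
    refine frequently_or_distrib.1 (Frequently.of_forall fun n => ?_)
    by_contra! h
    linarith [(hzF (φ n)).2.1, hzxy (φ n)]
  have ha : a ∈ fusibleRightLimits := by
    rcases hsplit with hxa' | hyb'
    · exact mem_fusibleRightLimits_of_tendsto hxa (fun n => hxF (φ n)) hxa'
    · have hb : b = m := le_antisymm hbm
        (hleast (mem_fusibleRightLimits_of_tendsto hyb (fun n => hyF (φ n)) hyb'))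
      refine mem_fusibleRightLimits_of_tendsto hxa (fun n => hxF (φ n))
        (Frequently.of_forall fun n => ?_)
      show a < x (φ n)
      linarith [(hzF (φ n)).2.1, hxz (φ n)]
  exact ham.not_ge (hleast ha)

theorem isWF_fusible : {x : ℝ | Fusible x}.IsWF := by
  rw [isWF_iff_no_descending_seq]
  intro f hf hF
  have hbdd : BddBelow (range f) := ⟨0, by rintro _ ⟨n, rfl⟩; exact (hF n).nonneg_s10⟩
  have hlim : ⨅ n, f n ∈ fusibleRightLimits :=
    mem_fusibleRightLimits_of_tendsto (tendsto_atTop_ciInf hf.antitone hbdd) hF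
      (Frequently.of_forall fun n => (ciInf_le hbdd (n + 1)).trans_lt (hf n.lt_succ_self))
  exact not_isLeast_fusibleRightLimits _ ⟨sInf_mem_fusibleRightLimits ⟨_, hlim⟩,
    fun _ => csInf_le ⟨0, fun _ => nonneg_of_mem_fusibleRightLimits⟩⟩

def fusionSummands (z : ℝ) : Set ℝ :=
  {x | ∃ y, Fusible x ∧ Fusible y ∧ |y - x| < 1 ∧ (x + y + 1) / 2 = z}

section fusionSummands

variable {x z : ℝ}

lemma fusible_of_mem_fusionSummands (hx : x ∈ fusionSummands z) : Fusible x :=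
  let ⟨_, hxF, _⟩ := hx; hxF

lemma lt_of_mem_fusionSummands (hx : x ∈ fusionSummands z) : x < z := by
  obtain ⟨y, -, -, hxy, rfl⟩ := hx
  linarith [neg_abs_le (y - x)]

lemma two_mul_sub_one_sub_mem_fusionSummands (hx : x ∈ fusionSummands z) :
    2 * z - 1 - x ∈ fusionSummands z := by
  obtain ⟨y, hxF, hyF, hxy, rfl⟩ := hx
  refine ⟨x, ?_, hxF, ?_, ?_⟩
  · convert hyF using 1; ring
  · convert abs_sub_comm y x ▸ hxy using 2; ring
  · ring

end fusionSummands

lemma finite_fusionSummands (z : ℝ) : (fusionSummands z).Finite := by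
  by_contra hinf
  have := Set.infinite_coe_iff.2 hinf
  have hdesc := isWF_iff_no_descending_seq.1 isWF_fusible
  obtain ⟨f, hmono | hanti⟩ := Infinite.exists_strictMono_or_strictAnti (fusionSummands z)
  · exact hdesc (fun n => 2 * z - 1 - f n) (fun m n hmn => by simpa using hmono hmn)
      fun n => fusible_of_mem_fusionSummands (two_mul_sub_one_sub_mem_fusionSummands (f n).2)
  · exact hdesc (fun n => f n) ((Subtype.strictMono_coe _).comp_strictAnti hanti)
      fun n => fusible_of_mem_fusionSummands (f n).2

lemma RepTree.Valid.fusible_val : ∀ {T : RepTree}, T.Valid → Fusible T.val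
  | .leaf, _ => Fusible.zero
  | .node _ _, ⟨hl, hr, hd⟩ => Fusible.fuse _ _ hl.fusible_val hr.fusible_val hd

lemma Fusible.exists_valid_rep {z : ℝ} (hz : Fusible z) :
    ∃ T : RepTree, T.Valid ∧ T.val = z := by
  induction hz with
  | zero => exact ⟨.leaf, trivial, rfl⟩
  | fuse x y _ _ hd ihx ihy =>
    obtain ⟨L, hL, rfl⟩ := ihx
    obtain ⟨R, hR, rfl⟩ := ihy
    exact ⟨.node L R, ⟨hL, hR, hd⟩, rfl⟩

def repHeights (z : ℝ) : Set ℕ := RepTree.height '' {T | T.Valid ∧ T.val = z}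

lemma repHeights_subset (z : ℝ) :
    repHeights z ⊆ insert 0 ((· + 1) '' ⋃ x ∈ fusionSummands z, repHeights x) := by
  rintro _ ⟨_ | ⟨L, R⟩, ⟨hT, rfl⟩, rfl⟩
  · exact mem_insert _ _
  obtain ⟨hL, hR, hd⟩ := hT
  have hLmem : L.val ∈ fusionSummands (RepTree.node L R).val :=
    ⟨R.val, hL.fusible_val, hR.fusible_val, hd, rfl⟩
  have hRmem : R.val ∈ fusionSummands (RepTree.node L R).val :=
    ⟨L.val, hR.fusible_val, hL.fusible_val, abs_sub_comm L.val R.val ▸ hd, by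
      simp only [RepTree.val]; ring⟩
  refine mem_insert_of_mem _ ⟨_, ?_, rfl⟩
  rcases max_choice L.height R.height with h | h <;> rw [h] <;> apply mem_biUnion
  exacts [hLmem, ⟨L, ⟨hL, rfl⟩, rfl⟩, hRmem, ⟨R, ⟨hR, rfl⟩, rfl⟩]

lemma bddAbove_repHeights {z : ℝ} (hz : Fusible z) : BddAbove (repHeights z) :=
  isWF_fusible.induction hz fun z _ ih =>
    ((monotone_id.add_const 1).map_bddAbove ((finite_fusionSummands z).bddAbove_biUnion.2
      fun x hx => ih x (fusible_of_mem_fusionSummands hx) (lt_of_mem_fusionSummands hx))).insert 0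
      |>.mono (repHeights_subset z)

theorem exists_max_height_rep (z : ℝ) (hz : Fusible z) :
    ∃ T : RepTree, T.Valid ∧ T.val = z ∧
      ∀ T' : RepTree, T'.Valid → T'.val = z → T'.height ≤ T.height := by
  have hbdd := bddAbove_repHeights hz
  obtain ⟨T, hT⟩ := hz.exists_valid_rep
  obtain ⟨Tmax, ⟨hvalid, hval⟩, hheight⟩ :=
    Nat.sSup_mem (s := repHeights z) ⟨T.height, T, hT, rfl⟩ hbdd
  exact ⟨Tmax, hvalid, hval, fun T' hvalid' hval' =>
    hheight ▸ le_csSup hbdd ⟨T', ⟨hvalid', hval'⟩, rfl⟩⟩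
end

section
/- Let z = p/2^n be a fusible number with p odd, and suppose z is a successor in the well-order on F. Then the predecessor of z (the largest fusible number less than z) equals (p−1)/2^n. -/
/-- `HMaxIs z n` means that the maximum height over all representations of `z` is `n`. -/
def HMaxIs (z : ℝ) (n : ℕ) : Prop :=
  (∃ T : RepTree, T.Valid ∧ T.val = z ∧ T.height = n) ∧
  ∀ T : RepTree, T.Valid → T.val = z → T.height ≤ n

/-- `z` is a limit fusible number: it is the supremum of the smaller fusible numbers. -/
def IsLimitFusible (z : ℝ) : Prop :=
  IsLUB {w : ℝ | Fusible w ∧ w < z} z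

/-!
Let `F_h` be the numbers obtained from `0` by at most `h` rounds of fusion; it lies in
`2⁻ʰ ℤ ∩ [0, ∞)`, so induction on the value within `F_h` is available. The key fact is
that lowering the last binary digit of `z = p / 2 ^ n ∈ F_h` (`p` odd) stays in `F_h`:
write `z = (x + y + 1) / 2` and compare the exact exponents `a ≤ b` of `x` and `y`.
If `a < b` (or `a = b = 0`) then `n = b + 1` and `z - 2⁻ⁿ = (x + (y - 2⁻ᵇ) + 1) / 2`,
which is either a fusion or equal to `x`; if `a = b ≥ 1` then fusing `x - 2⁻ᵃ` and
`y - 2⁻ᵃ` gives `z - 2⁻ᵃ` with `n ≤ a`, and the induction hypothesis walks down from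
`z - 2⁻ᵃ` to `z - 2⁻ⁿ`.

Conversely, a fusible `w ∈ 2⁻ᵐ ℤ` built in `m` rounds has a fusible number in
`(w, w + 2⁻ᵐ)`. If `w` is the predecessor of `z`, that number is at least `z`, so
`z - w < 2⁻ᵐ`; as `z - w` is a positive multiple of `2^-max(m, n)`, this forces
`w ≤ z - 2⁻ⁿ`.
-/

def OnGrid (n : ℕ) (x : ℝ) : Prop := ∃ p : ℤ, x = (p : ℝ) / 2 ^ n

def OddDyadic (n : ℕ) (x : ℝ) : Prop := ∃ p : ℤ, Odd p ∧ x = (p : ℝ) / 2 ^ n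

namespace OnGrid

variable {m n : ℕ} {x y : ℝ}

theorem one (n : ℕ) : OnGrid n 1 := ⟨2 ^ n, by push_cast; field_simp⟩

theorem neg (hx : OnGrid n x) : OnGrid n (-x) := by
  obtain ⟨p, rfl⟩ := hx
  exact ⟨-p, by push_cast; ring⟩

theorem add (hx : OnGrid n x) (hy : OnGrid n y) : OnGrid n (x + y) := by
  obtain ⟨p, rfl⟩ := hx
  obtain ⟨q, rfl⟩ := hy
  exact ⟨p + q, by push_cast; ring⟩

theorem sub (hx : OnGrid n x) (hy : OnGrid n y) : OnGrid n (x - y) := by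
  simpa only [sub_eq_add_neg] using hx.add hy.neg

theorem div_two (hx : OnGrid n x) : OnGrid (n + 1) (x / 2) := by
  obtain ⟨p, rfl⟩ := hx
  exact ⟨p, by rw [pow_succ]; ring⟩

theorem mono (hx : OnGrid m x) (h : m ≤ n) : OnGrid n x := by
  obtain ⟨p, rfl⟩ := hx
  obtain ⟨d, rfl⟩ := Nat.exists_eq_add_of_le h
  exact ⟨p * 2 ^ d, by push_cast; rw [pow_add]; field_simp⟩

theorem add_le_of_lt (hx : OnGrid n x) (hy : OnGrid n y) (h : x < y) : x + 1 / 2 ^ n ≤ y := by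
  obtain ⟨p, rfl⟩ := hx
  obtain ⟨q, rfl⟩ := hy
  have hpq : p + 1 ≤ q := by
    have := (div_lt_div_iff_of_pos_right (by positivity : (0 : ℝ) < 2 ^ n)).1 h
    exact_mod_cast this
  rw [← add_div]
  gcongr
  exact_mod_cast hpq

theorem exists_isExp (hx : OnGrid n x) : ∃ a, IsExp x a := by
  classical
  have h : ∃ a, OnGrid a x := ⟨n, hx⟩
  exact ⟨Nat.find h, Nat.find_spec h, fun _ hm => Nat.find_min h hm⟩

theorem oddDyadic_sub_one_div_two_pow (hx : OnGrid n x) :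
    OddDyadic (n + 1) (x - 1 / 2 ^ (n + 1)) := by
  obtain ⟨p, rfl⟩ := hx
  exact ⟨2 * p - 1, ⟨p - 1, by ring⟩, by push_cast; rw [pow_succ]; field_simp⟩

end OnGrid

theorem IsExp.onGrid {n : ℕ} {x : ℝ} (hx : IsExp x n) : OnGrid n x := hx.1

theorem IsExp.oddDyadic {n : ℕ} {x : ℝ} (hx : IsExp x n) (hn : n ≠ 0) : OddDyadic n x := by
  obtain ⟨m, rfl⟩ := Nat.exists_eq_succ_of_ne_zero hn
  obtain ⟨⟨p, rfl⟩, hmin⟩ := hx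
  rcases Int.even_or_odd p with ⟨k, rfl⟩ | hp
  · exact absurd ⟨k, by push_cast; rw [pow_succ]; field_simp; ring⟩ (hmin m m.lt_succ_self)
  · exact ⟨p, hp, rfl⟩

namespace OddDyadic

variable {m n : ℕ} {x y : ℝ}

theorem onGrid (hx : OddDyadic n x) : OnGrid n x :=
  let ⟨p, _, hp⟩ := hx
  ⟨p, hp⟩

theorem not_onGrid (hx : OddDyadic n x) (h : m < n) : ¬ OnGrid m x := by
  rintro ⟨q, hq⟩
  obtain ⟨p, hp, rfl⟩ := hx
  obtain ⟨d, rfl⟩ := Nat.exists_eq_add_of_lt h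
  have : p = 2 * (q * 2 ^ d) := by
    have : (p : ℝ) = 2 * (q * 2 ^ d) := by
      rw [div_eq_div_iff (by positivity) (by positivity), pow_add, pow_succ] at hq
      have h2m : (2 : ℝ) ^ m ≠ 0 := by positivity
      apply mul_right_cancel₀ h2m
      linear_combination hq
    exact_mod_cast this
  exact Int.not_even_iff_odd.2 hp ⟨q * 2 ^ d, by rw [this]; ring⟩

theorem unique (hm : OddDyadic m x) (hn : OddDyadic n x) : m = n := by
  by_contra hne
  rcases Nat.lt_or_gt_of_ne hne with h | h
  · exact hn.not_onGrid h hm.onGrid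
  · exact hm.not_onGrid h hn.onGrid

theorem ne_zero (hx : OddDyadic n x) : x ≠ 0 := by
  obtain ⟨p, hp, rfl⟩ := hx
  exact div_ne_zero (Int.cast_ne_zero.2 (by rintro rfl; simp at hp)) (by positivity)

theorem div_two (hx : OddDyadic n x) : OddDyadic (n + 1) (x / 2) := by
  obtain ⟨p, hp, rfl⟩ := hx
  exact ⟨p, hp, by rw [pow_succ]; ring⟩

theorem add_onGrid (hx : OddDyadic (n + 1) x) (hy : OnGrid n y) : OddDyadic (n + 1) (x + y) := by
  obtain ⟨p, hp, rfl⟩ := hx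
  obtain ⟨q, rfl⟩ := hy
  exact ⟨p + 2 * q, hp.add_even (even_two_mul q), by push_cast; rw [pow_succ]; field_simp⟩

theorem add (hx : OddDyadic (n + 1) x) (hy : OddDyadic (n + 1) y) : OnGrid n (x + y) := by
  obtain ⟨p, hp, rfl⟩ := hx
  obtain ⟨q, hq, rfl⟩ := hy
  obtain ⟨k, hk⟩ := hp.add_odd hq
  exact ⟨k, by rw [← add_div, ← Int.cast_add, hk, pow_succ]; push_cast; field_simp; ring⟩

end OddDyadic

inductive FusibleOfHeightLE : ℕ → ℝ → Prop
  | zero (h : ℕ) : FusibleOfHeightLE h 0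
  | fuse (h : ℕ) (x y : ℝ) : FusibleOfHeightLE h x → FusibleOfHeightLE h y → |y - x| < 1 →
      FusibleOfHeightLE (h + 1) ((x + y + 1) / 2)

namespace FusibleOfHeightLE

variable {g h : ℕ} {x y z : ℝ}

theorem mono (hx : FusibleOfHeightLE g x) (hgh : g ≤ h) : FusibleOfHeightLE h x := by
  induction hx generalizing h with
  | zero => exact .zero h
  | fuse g x y _ _ hxy ihx ihy =>
    obtain ⟨k, rfl⟩ := Nat.exists_eq_add_of_lt hgh
    exact .fuse _ _ _ (ihx (by omega)) (ihy (by omega)) hxy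

theorem fusible (hx : FusibleOfHeightLE h x) : Fusible x := by
  induction hx with
  | zero => exact .zero
  | fuse _ x y _ _ hxy ihx ihy => exact .fuse x y ihx ihy hxy

theorem exists_nat_eq_div (hx : FusibleOfHeightLE h x) : ∃ k : ℕ, x = k / 2 ^ h := by
  induction hx with
  | zero h => exact ⟨0, by simp⟩
  | fuse h x y _ _ _ ihx ihy =>
    obtain ⟨k, rfl⟩ := ihx
    obtain ⟨l, rfl⟩ := ihy
    exact ⟨k + l + 2 ^ h, by push_cast; rw [pow_succ]; field_simp⟩

theorem onGrid (hx : FusibleOfHeightLE h x) : OnGrid h x :=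
  let ⟨k, hk⟩ := hx.exists_nat_eq_div
  ⟨k, by rw [hk, Int.cast_natCast]⟩

theorem induction_on_lt {P : ℝ → Prop} (hz : FusibleOfHeightLE h z)
    (step : ∀ z, FusibleOfHeightLE h z →
      (∀ w, FusibleOfHeightLE h w → w < z → P w) → P z) :
    P z := by
  obtain ⟨k, rfl⟩ := hz.exists_nat_eq_div
  induction k using Nat.strong_induction_on with
  | _ k ih =>
    refine step _ hz fun w hw hwz => ?_
    obtain ⟨j, rfl⟩ := hw.exists_nat_eq_div
    have hjk : j < k := by
      have := (div_lt_div_iff_of_pos_right (by positivity : (0 : ℝ) < 2 ^ h)).1 hwz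
      exact_mod_cast this
    exact ih j hjk hw

theorem sub_one_div_two_pow_of_le {n a : ℕ} (hz : OnGrid n z) (hna : n ≤ a)
    (ih : ∀ w < z, FusibleOfHeightLE h w → ∀ m, OddDyadic m w →
      FusibleOfHeightLE h (w - 1 / 2 ^ m))
    (ha : FusibleOfHeightLE h (z - 1 / 2 ^ a)) : FusibleOfHeightLE h (z - 1 / 2 ^ n) := by
  induction a, hna using Nat.le_induction with
  | base => exact ha
  | succ a hna iha =>
    have hw := ih _ (sub_lt_self z (by positivity)) ha _
      (hz.mono hna).oddDyadic_sub_one_div_two_pow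
    refine iha ?_
    convert hw using 1
    rw [pow_succ]
    ring

theorem fuse_sub_one_div_two_pow_succ {b : ℕ} (hx : FusibleOfHeightLE g x)
    (hy : FusibleOfHeightLE g (y - 1 / 2 ^ b)) (hxb : OnGrid b x) (hyb : OnGrid b y)
    (hxy : |y - x| < 1) : FusibleOfHeightLE (g + 1) ((x + y + 1) / 2 - 1 / 2 ^ (b + 1)) := by
  have hval : (x + y + 1) / 2 - 1 / 2 ^ (b + 1) = (x + (y - 1 / 2 ^ b) + 1) / 2 := by
    rw [pow_succ]
    ring
  rw [abs_lt] at hxy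
  have hb : (0 : ℝ) < 1 / 2 ^ b := by positivity
  have hgap : -1 + 1 / 2 ^ b ≤ y - x := (OnGrid.one b).neg.add_le_of_lt (hyb.sub hxb) hxy.1
  rw [hval]
  rcases hgap.lt_or_eq with hlt | heq
  · exact .fuse _ _ _ hx hy (abs_lt.2 ⟨by linarith, by linarith⟩)
  · convert hx.mono g.le_succ using 1
    linarith

theorem fuse_sub_one_div_two_pow_of_oddDyadic {a n : ℕ}
    (hx : FusibleOfHeightLE g (x - 1 / 2 ^ (a + 1)))
    (hy : FusibleOfHeightLE g (y - 1 / 2 ^ (a + 1)))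
    (hxy : |y - x| < 1) (hz : z = (x + y + 1) / 2) (hodd : OddDyadic n z)
    (hxa : OddDyadic (a + 1) x) (hya : OddDyadic (a + 1) y)
    (ih : ∀ w < z, FusibleOfHeightLE (g + 1) w → ∀ m, OddDyadic m w →
      FusibleOfHeightLE (g + 1) (w - 1 / 2 ^ m)) :
    FusibleOfHeightLE (g + 1) (z - 1 / 2 ^ n) := by
  have hza : OnGrid (a + 1) z := by
    rw [hz]
    exact ((hxa.add hya).add (.one a)).div_two
  have hn : n ≤ a + 1 := not_lt.1 fun h => hodd.not_onGrid h hza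
  refine sub_one_div_two_pow_of_le hodd.onGrid hn ih ?_
  rw [hz, show (x + y + 1) / 2 - 1 / 2 ^ (a + 1)
    = (x - 1 / 2 ^ (a + 1) + (y - 1 / 2 ^ (a + 1)) + 1) / 2 by ring]
  exact .fuse _ _ _ hx hy (by rwa [sub_sub_sub_cancel_right])

theorem fuse_sub_one_div_two_pow {n : ℕ} (hx : FusibleOfHeightLE g x)
    (hy : FusibleOfHeightLE g y) (hxy : |y - x| < 1) (hz : z = (x + y + 1) / 2)
    (hodd : OddDyadic n z)
    (ih : ∀ w < z, ∀ h ≤ g + 1, FusibleOfHeightLE h w → ∀ m, OddDyadic m w →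
      FusibleOfHeightLE h (w - 1 / 2 ^ m)) :
    FusibleOfHeightLE (g + 1) (z - 1 / 2 ^ n) := by
  obtain ⟨a, ha⟩ := hx.onGrid.exists_isExp
  obtain ⟨b, hb⟩ := hy.onGrid.exists_isExp
  wlog hab : a ≤ b generalizing x y a b
  · exact this hy hx (by rwa [abs_sub_comm]) (by rw [hz]; ring) b hb a ha (by omega)
  have hxz : x < z := by rw [hz]; linarith [(abs_lt.1 hxy).1]
  have hyz : y < z := by rw [hz]; linarith [(abs_lt.1 hxy).2]
  rcases hab.lt_or_eq with hab | rfl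
  · obtain ⟨c, rfl⟩ := Nat.exists_eq_add_of_lt hab
    have hxc : OnGrid (a + c) x := ha.onGrid.mono (by omega)
    have hyodd : OddDyadic (a + c + 1) y := hb.oddDyadic (by omega)
    have hn : n = a + c + 1 + 1 := by
      refine hodd.unique ?_
      rw [hz, show x + y + 1 = y + (x + 1) by ring]
      exact (hyodd.add_onGrid (hxc.add (.one _))).div_two
    subst hn
    rw [hz]
    exact fuse_sub_one_div_two_pow_succ hx (ih y hyz g g.le_succ hy _ hyodd)
      (hxc.mono (by omega)) hb.onGrid hxy
  · rcases Nat.eq_zero_or_pos a with rfl | ha0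
    · have hyx : y = x := by
        obtain ⟨k, hk⟩ := hb.onGrid.sub ha.onGrid
        rw [pow_zero, div_one] at hk
        rw [hk, ← Int.cast_abs, ← Int.cast_one, Int.cast_lt, Int.abs_lt_one_iff] at hxy
        rw [← sub_eq_zero, hk, hxy, Int.cast_zero]
      have hn : n = 0 + 1 := by
        refine hodd.unique ?_
        rw [hz, hyx, show (x + x + 1) / 2 = x + 1 - 1 / 2 ^ (0 + 1) by ring]
        exact (ha.onGrid.add (.one 0)).oddDyadic_sub_one_div_two_pow
      subst hn hyx
      rw [hz]
      convert hx.mono g.le_succ using 1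
      ring
    · obtain ⟨c, rfl⟩ : ∃ c, a = c + 1 := ⟨a - 1, by omega⟩
      have hxodd := ha.oddDyadic c.succ_ne_zero
      have hyodd := hb.oddDyadic c.succ_ne_zero
      exact fuse_sub_one_div_two_pow_of_oddDyadic (ih x hxz g g.le_succ hx _ hxodd)
        (ih y hyz g g.le_succ hy _ hyodd) hxy hz hodd hxodd hyodd fun w hw => ih w hw _ le_rfl

theorem sub_one_div_two_pow {n : ℕ} (hz : FusibleOfHeightLE h z)
    (hodd : OddDyadic n z) : FusibleOfHeightLE h (z - 1 / 2 ^ n) := by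
  refine hz.induction_on_lt (P := fun z => ∀ g ≤ h, FusibleOfHeightLE g z →
    ∀ n, OddDyadic n z → FusibleOfHeightLE g (z - 1 / 2 ^ n)) ?_ h le_rfl hz n hodd
  intro z _ ih g hgh hz n hodd
  cases hz with
  | zero => exact absurd rfl hodd.ne_zero
  | fuse g x y hx hy hxy =>
    exact fuse_sub_one_div_two_pow hx hy hxy rfl hodd fun w hwz g' hg' hw =>
      ih w (hw.mono (by omega)) hwz g' (by omega) hw

end FusibleOfHeightLE

theorem Fusible.exists_fusibleOfHeightLE {x : ℝ} (hx : Fusible x) :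
    ∃ h, FusibleOfHeightLE h x := by
  induction hx with
  | zero => exact ⟨0, .zero 0⟩
  | fuse x y _ _ hxy ihx ihy =>
    obtain ⟨a, hx⟩ := ihx
    obtain ⟨b, hy⟩ := ihy
    exact ⟨max a b + 1,
      .fuse _ _ _ (hx.mono (le_max_left a b)) (hy.mono (le_max_right a b)) hxy⟩

theorem Fusible.sub_one_div_two_pow {n : ℕ} {z : ℝ} (hz : Fusible z) (hodd : OddDyadic n z) :
    Fusible (z - 1 / 2 ^ n) :=
  let ⟨_, hh⟩ := hz.exists_fusibleOfHeightLE
  (hh.sub_one_div_two_pow hodd).fusible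

theorem fusible_one_half : Fusible (1 / 2) := by
  simpa using Fusible.fuse 0 0 .zero .zero (by simp)

theorem exists_fusible_gap_fuse {a : ℕ} {x y u : ℝ} (hxa : OnGrid a x) (hya : OnGrid a y)
    (hu : Fusible u) (hy : Fusible y) (hxu : x < u) (hux : u < x + 1 / 2 ^ a) (hxy : |y - x| < 1) :
    ∃ m, OnGrid m ((x + y + 1) / 2) ∧
      ∃ v, Fusible v ∧ (x + y + 1) / 2 < v ∧ v < (x + y + 1) / 2 + 1 / 2 ^ m := by
  rw [abs_lt] at hxy
  have hgap : -1 + 1 / 2 ^ a ≤ y - x := (OnGrid.one a).neg.add_le_of_lt (hya.sub hxa) hxy.1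
  refine ⟨a + 1, ((hxa.add hya).add (.one a)).div_two, (u + y + 1) / 2,
    .fuse u y hu hy (abs_lt.2 ⟨by linarith, by linarith⟩), by linarith, ?_⟩
  rw [pow_succ]
  linarith [show 1 / 2 ^ a / 2 = 1 / (2 ^ a * 2 : ℝ) by ring]

theorem Fusible.exists_gap {x : ℝ} (hx : Fusible x) :
    ∃ m, OnGrid m x ∧ ∃ u, Fusible u ∧ x < u ∧ u < x + 1 / 2 ^ m := by
  induction hx with
  | zero => exact ⟨0, ⟨0, by simp⟩, 1 / 2, fusible_one_half, by norm_num, by norm_num⟩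
  | fuse x y hx hy hxy ihx ihy =>
    obtain ⟨a, hxa, u, hu, hxu, hux⟩ := ihx
    obtain ⟨b, hyb, v, hv, hyv, hvy⟩ := ihy
    rcases le_total b a with hba | hab
    · exact exists_fusible_gap_fuse hxa (hyb.mono hba) hu hy hxu hux hxy
    · have := exists_fusible_gap_fuse hyb (hxa.mono hab) hv hx hyv hvy (by rwa [abs_sub_comm])
      rwa [add_comm y x] at this

theorem predecessor_formula (p : ℤ) (n : ℕ) (z : ℝ) (hp : Odd p)
    (hzval : z = (p : ℝ) / 2 ^ n) (hz : Fusible z)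
    (hsucc : ∃ w : ℝ, IsGreatest {u : ℝ | Fusible u ∧ u < z} w) :
    IsGreatest {u : ℝ | Fusible u ∧ u < z} (((p : ℝ) - 1) / 2 ^ n) := by
  obtain ⟨w, ⟨hwF, hwz⟩, hw⟩ := hsucc
  have hzn : OnGrid n z := ⟨p, hzval⟩
  have hwle : w + 1 / 2 ^ n ≤ z := by
    obtain ⟨m, hwm, v, hv, hwv, hvw⟩ := hwF.exists_gap
    have hzv : z ≤ v := not_lt.1 fun hvz => (hw ⟨hv, hvz⟩).not_gt hwv
    rcases le_total m n with hmn | hnm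
    · exact (hwm.mono hmn).add_le_of_lt hzn hwz
    · linarith [hwm.add_le_of_lt (hzn.mono hnm) hwz]
  rw [sub_div, ← hzval]
  exact ⟨⟨hz.sub_one_div_two_pow ⟨p, hp, hzval⟩, sub_lt_self z (by positivity)⟩,
    fun u hu => by linarith [hw hu]⟩
end

section
/- If z > 1 is a fusible number that is a limit of smaller fusible numbers, then z = (x + y + 1)/2 for some fusible x, y with |y − x| < 1 such that at least one of x, y is itself a limit of smaller fusible numbers. -/
/-!
Fusible numbers are well ordered: in a minimal bad sequence, ranked by the least height of a
representation tree, a strictly decreasing sequence `z n = x n ∼ y n` (with `x n ≤ y n`) yields a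
strictly decreasing sequence of children of smaller rank — a subsequence of the `x n` if these
have one, and otherwise, along a subsequence where the `x n` increase, the `y n`.

Now let fusible `z n` increase to `z` and write `z n = a n ∼ b n` with `a n ≤ b n`. Along a
subsequence both are monotone, with limits `α ≤ β` and `α + β = 2 z - 1`. If `β < z`, then
`z = α ∼ β`, and `α`, `β` cannot both be attained (that would make some `z n = z`), so one of them
is a limit. If `β = z`, then `z - 1 = α = x ∼ y` and `z = (x + 1) ∼ (y + 1)`, where `x + 1` is the
limit of `x ∼ (x ∼ (⋯ ∼ x))`. That `α` and `β` are fusible at all needs the closedness of the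
fusible numbers, which follows from the same analysis by well-founded induction on the limits.
-/

open Filter Topology

theorem Fusible.nonneg_s16 {x : ℝ} (h : Fusible x) : 0 ≤ x := by
  induction h with
  | zero => exact le_rfl
  | fuse x y _ _ _ ihx ihy => linarith

theorem Fusible.add_one_s16 {x : ℝ} (h : Fusible x) : Fusible (x + 1) := by
  induction h with
  | zero =>
    have half : Fusible (1 / 2) := by simpa using Fusible.fuse 0 0 .zero .zero (by simp)
    convert Fusible.fuse _ _ half half (by simp) using 1
    norm_num
  | fuse x y _ _ hxy ihx ihy =>
    convert Fusible.fuse _ _ ihx ihy (by simpa using hxy) using 1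
    ring

theorem Fusible.add_one_sub_half_pow {x : ℝ} (h : Fusible x) (n : ℕ) :
    Fusible (x + 1 - (1 / 2) ^ n) := by
  induction n with
  | zero => simpa using h
  | succ n ih =>
    have hpos : 0 < ((1 : ℝ) / 2) ^ n := by positivity
    have hle : ((1 : ℝ) / 2) ^ n ≤ 1 := pow_le_one₀ (by norm_num) (by norm_num)
    convert Fusible.fuse _ _ h ih (abs_lt.2 ⟨by linarith, by linarith⟩) using 1
    ring

theorem isLimitFusible_of_tendsto {c : ℕ → ℝ} {γ : ℝ} (hc : ∀ n, Fusible (c n))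
    (hlt : ∀ n, c n < γ) (h : Tendsto c atTop (𝓝 γ)) : IsLimitFusible γ :=
  ⟨fun _ hw => hw.2.le, fun _ hu => le_of_tendsto' h fun n => hu ⟨hc n, hlt n⟩⟩

theorem Fusible.isLimitFusible_add_one {x : ℝ} (h : Fusible x) : IsLimitFusible (x + 1) := by
  refine isLimitFusible_of_tendsto h.add_one_sub_half_pow
    (fun n => sub_lt_self _ (by positivity)) ?_
  simpa using tendsto_const_nhds.sub (tendsto_pow_atTop_nhds_zero_of_lt_one
    (r := (1 : ℝ) / 2) (by norm_num) (by norm_num))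

theorem IsLimitFusible.exists_seq_tendsto {s : ℝ} (hs : IsLimitFusible s) :
    ∃ z : ℕ → ℝ, (∀ n, Fusible (z n) ∧ 0 < z n ∧ z n < s) ∧ Tendsto z atTop (𝓝 s) := by
  obtain ⟨u, hu_mono, -, hu_lim, hu⟩ :=
    hs.exists_seq_strictMono_tendsto_of_notMem (fun h => h.2.false) hs.nonempty
  refine ⟨fun n => u (n + 1), fun n => ⟨(hu _).1, ?_, (hu _).2⟩,
    (tendsto_add_atTop_iff_nat 1).2 hu_lim⟩
  exact (hu 0).1.nonneg_s16.trans_lt (hu_mono n.succ_pos)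

theorem Monotone.eventually_eq_or_isLimitFusible {c : ℕ → ℝ} {γ : ℝ} (hc : Monotone c)
    (hfus : ∀ n, Fusible (c n)) (h : Tendsto c atTop (𝓝 γ)) :
    (∀ᶠ n in atTop, c n = γ) ∨ IsLimitFusible γ := by
  by_cases hlt : ∀ n, c n < γ
  · exact .inr (isLimitFusible_of_tendsto hfus hlt h)
  · obtain ⟨n, hn⟩ := not_forall.1 hlt
    refine .inl (eventually_atTop.2 ⟨n, fun k hk => ?_⟩)
    exact le_antisymm (hc.ge_of_tendsto h k) ((not_lt.1 hn).trans (hc hk))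

theorem Fusible.exists_repTree {x : ℝ} (h : Fusible x) : ∃ T : RepTree, T.Valid ∧ T.val = x := by
  induction h with
  | zero => exact ⟨.leaf, trivial, rfl⟩
  | fuse x y _ _ hxy ihx ihy =>
    obtain ⟨T, hT, rfl⟩ := ihx
    obtain ⟨U, hU, rfl⟩ := ihy
    exact ⟨.node T U, ⟨hT, hU, hxy⟩, rfl⟩

theorem RepTree.Valid.fusible {T : RepTree} (h : T.Valid) : Fusible T.val := by
  induction T with
  | leaf => exact .zero
  | node l r ihl ihr => exact .fuse _ _ (ihl h.1) (ihr h.2.1) h.2.2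

noncomputable def minRepHeight (x : ℝ) : ℕ :=
  sInf {n | ∃ T : RepTree, T.Valid ∧ T.val = x ∧ T.height = n}

theorem Fusible.exists_repTree_height_eq_minRepHeight {x : ℝ} (h : Fusible x) :
    ∃ T : RepTree, T.Valid ∧ T.val = x ∧ T.height = minRepHeight x := by
  obtain ⟨T, hT, rfl⟩ := h.exists_repTree
  exact Nat.sInf_mem (s := {n | ∃ U : RepTree, U.Valid ∧ U.val = T.val ∧ U.height = n})
    ⟨T.height, T, hT, rfl, rfl⟩

theorem RepTree.Valid.minRepHeight_le {T : RepTree} (h : T.Valid) : minRepHeight T.val ≤ T.height :=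
  Nat.sInf_le ⟨T, h, rfl, rfl⟩

theorem Fusible.exists_fuse_eq {z : ℝ} (hz : Fusible z) (hz0 : z ≠ 0) :
    ∃ x y : ℝ, Fusible x ∧ Fusible y ∧ x ≤ y ∧ |y - x| < 1 ∧ z = (x + y + 1) / 2 ∧
      minRepHeight x < minRepHeight z ∧ minRepHeight y < minRepHeight z := by
  obtain ⟨T, hT, rfl, hT_height⟩ := hz.exists_repTree_height_eq_minRepHeight
  cases T with
  | leaf => exact absurd rfl hz0
  | node l r =>
    obtain ⟨hl, hr, hlr⟩ := hT
    have hl_lt : minRepHeight l.val < minRepHeight (l.node r).val := by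
      have := hl.minRepHeight_le; simp only [RepTree.height] at hT_height; omega
    have hr_lt : minRepHeight r.val < minRepHeight (l.node r).val := by
      have := hr.minRepHeight_le; simp only [RepTree.height] at hT_height; omega
    rcases le_total l.val r.val with h | h
    · exact ⟨l.val, r.val, hl.fusible, hr.fusible, h, hlr, rfl, hl_lt, hr_lt⟩
    · refine ⟨r.val, l.val, hr.fusible, hl.fusible, h, by rwa [abs_sub_comm], ?_, hr_lt, hl_lt⟩
      simp only [RepTree.val]; ring

theorem StrictAnti.splice {α : Type*} [Preorder α] {f c : ℕ → α} {m : ℕ} (hf : StrictAnti f)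
    (hc : StrictAnti c) (hcf : c 0 < f m) :
    StrictAnti fun k => if k < m then f k else c (k - m) := by
  refine strictAnti_nat_of_succ_lt fun k => ?_
  rcases lt_trichotomy (k + 1) m with hk | rfl | hk
  · rw [if_pos hk, if_pos (k.lt_succ_self.trans hk)]
    exact hf k.lt_succ_self
  · rw [if_neg (lt_irrefl _), if_pos k.lt_succ_self, Nat.sub_self]
    exact hcf.trans (hf k.lt_succ_self)
  · rw [if_neg hk.not_gt, if_neg (Nat.lt_succ_iff.1 hk).not_gt]
    exact hc (by omega)

theorem fusible_isPWO : {x : ℝ | Fusible x}.IsPWO := by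
  rw [Set.IsPWO, Set.PartiallyWellOrderedOn.iff_not_exists_isMinBadSeq minRepHeight]
  rintro ⟨f, ⟨hf_fus, hf_bad⟩, hf_min⟩
  have hf_anti : StrictAnti f := fun m n h => not_le.1 (hf_bad m n h)
  have hf_pos : ∀ n, 0 < f n := fun n => (hf_fus (n + 1)).nonneg_s16.trans_lt (hf_anti n.lt_succ_self)
  choose a b ha hb _ hab hf_eq ha_rk hb_rk using fun n => (hf_fus n).exists_fuse_eq (hf_pos n).ne'
  have no_smaller : ∀ (m : ℕ) (c : ℕ → ℝ), (∀ k, Fusible (c k)) → StrictAnti c → c 0 < f m →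
      minRepHeight (c 0) < minRepHeight (f m) → False := by
    intro m c hc_fus hc_anti hcf hc_rk
    refine hf_min m (fun k => if k < m then f k else c (k - m)) (fun k hk => by simp [hk])
      (by simpa using hc_rk) ⟨fun k => ?_, ?_⟩
    · dsimp only; split_ifs
      exacts [hf_fus k, hc_fus _]
    · exact fun i j hij => not_le.2 (hf_anti.splice hc_anti hcf hij)
  obtain ⟨g, ha_mono | ha_anti⟩ := exists_increasing_or_nonincreasing_subseq (· ≤ ·) a
  · refine no_smaller (g 0) (b ∘ g) (fun k => hb _) (fun k l hkl => ?_) ?_ (hb_rk _)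
    · have := hf_anti (g.strictMono hkl)
      have := ha_mono k l hkl
      simp only [Function.comp_apply]; linarith [hf_eq (g k), hf_eq (g l)]
    · simp only [Function.comp_apply]; linarith [abs_lt.1 (hab (g 0)), hf_eq (g 0)]
  · refine no_smaller (g 0) (a ∘ g) (fun k => ha _) (fun k l hkl => not_le.1 (ha_anti k l hkl)) ?_
      (ha_rk _)
    simp only [Function.comp_apply]; linarith [abs_lt.1 (hab (g 0)), hf_eq (g 0)]

theorem IsLimitFusible.exists_monotone_fuse_tendsto {s : ℝ} (hs : IsLimitFusible s) :
    ∃ (a b : ℕ → ℝ) (α β : ℝ), Monotone a ∧ Monotone b ∧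
      (∀ n, Fusible (a n) ∧ Fusible (b n) ∧ a n ≤ b n ∧ b n < s ∧ (a n + b n + 1) / 2 < s) ∧
      Tendsto a atTop (𝓝 α) ∧ Tendsto b atTop (𝓝 β) ∧ α + β = 2 * s - 1 := by
  obtain ⟨z, hz, hz_lim⟩ := hs.exists_seq_tendsto
  choose a b ha hb hab hba hz_eq _ _ using fun n => (hz n).1.exists_fuse_eq (hz n).2.1.ne'
  have hb_lt : ∀ n, b n < s := fun n => by linarith [abs_lt.1 (hba n), hz_eq n, (hz n).2.2]
  obtain ⟨φ, hφ⟩ := (fusible_isPWO.prod fusible_isPWO).exists_monotone_subseq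
    (f := fun n => (a n, b n)) fun n => ⟨ha n, hb n⟩
  have ha_mono : Monotone (a ∘ φ) := fun _ _ h => (hφ h).1
  have hb_mono : Monotone (b ∘ φ) := fun _ _ h => (hφ h).2
  have hα := tendsto_atTop_ciSup ha_mono
    ⟨s, by rintro _ ⟨n, rfl⟩; exact (hab _).trans (hb_lt _).le⟩
  have hβ := tendsto_atTop_ciSup hb_mono ⟨s, by rintro _ ⟨n, rfl⟩; exact (hb_lt _).le⟩
  refine ⟨a ∘ φ, b ∘ φ, _, _, ha_mono, hb_mono, fun n => ⟨ha _, hb _, hab _, hb_lt _, ?_⟩,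
    hα, hβ, tendsto_nhds_unique (hα.add hβ) ?_⟩
  · simpa only [Function.comp_apply, ← hz_eq] using (hz (φ n)).2.2
  · have := ((hz_lim.comp φ.strictMono.tendsto_atTop).const_mul 2).sub_const 1
    exact this.congr fun n => by simp only [Function.comp_apply, hz_eq]; ring

theorem IsLimitFusible.fusible_sub_one_or_exists_fuse {s : ℝ} (hs : IsLimitFusible s)
    (ih : ∀ σ < s, IsLimitFusible σ → Fusible σ) :
    Fusible (s - 1) ∨ ∃ x y : ℝ, Fusible x ∧ Fusible y ∧ |y - x| < 1 ∧ s = (x + y + 1) / 2 ∧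
      (IsLimitFusible x ∨ IsLimitFusible y) := by
  obtain ⟨a, b, α, β, ha_mono, hb_mono, hab, hα, hβ, hαβ_sum⟩ := hs.exists_monotone_fuse_tendsto
  have hαβ : α ≤ β := le_of_tendsto_of_tendsto' hα hβ fun n => (hab n).2.2.1
  have hβs : β ≤ s := le_of_tendsto' hβ fun n => (hab n).2.2.2.1.le
  have fusible_of_lt : ∀ {c : ℕ → ℝ} {γ : ℝ}, Monotone c → (∀ n, Fusible (c n)) →
      Tendsto c atTop (𝓝 γ) → γ < s → Fusible γ := by
    intro c γ hc hc_fus hc_lim hγs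
    rcases hc.eventually_eq_or_isLimitFusible hc_fus hc_lim with h | h
    · obtain ⟨n, hn⟩ := h.exists
      exact hn ▸ hc_fus n
    · exact ih γ hγs h
  have hα_fus : Fusible α := fusible_of_lt ha_mono (fun n => (hab n).1) hα (by linarith)
  rcases hβs.lt_or_eq with hβs | hβs
  · refine .inr ⟨α, β, hα_fus, fusible_of_lt hb_mono (fun n => (hab n).2.1) hβ hβs,
      abs_lt.2 ⟨by linarith, by linarith⟩, by linarith, ?_⟩
    rcases ha_mono.eventually_eq_or_isLimitFusible (fun n => (hab n).1) hα with ha_eq | hα_lim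
    · rcases hb_mono.eventually_eq_or_isLimitFusible (fun n => (hab n).2.1) hβ with hb_eq | hβ_lim
      · obtain ⟨n, ha_n, hb_n⟩ := (ha_eq.and hb_eq).exists
        linarith [(hab n).2.2.2.2]
      · exact .inr hβ_lim
    · exact .inl hα_lim
  · exact .inl (by convert hα_fus using 1; linarith)

theorem isWF_setOf_isLimitFusible : {s : ℝ | IsLimitFusible s}.IsWF := by
  rw [Set.isWF_iff_no_descending_seq]
  intro f hf hf_lim
  choose g hg using fun n => (lt_isLUB_iff (hf_lim n)).1 (hf n.lt_succ_self)
  refine Set.isWF_iff_no_descending_seq.1 fusible_isPWO.isWF g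
    (strictAnti_nat_of_succ_lt fun n => ?_) fun n => (hg n).1.1
  exact (hg (n + 1)).1.2.trans (hg n).2

theorem IsLimitFusible.fusible {s : ℝ} (hs : IsLimitFusible s) : Fusible s := by
  refine isWF_setOf_isLimitFusible.induction hs fun s hs ih => ?_
  rcases IsLimitFusible.fusible_sub_one_or_exists_fuse hs fun σ hσs hσ => ih σ hσ hσs with
    h | ⟨x, y, hx, hy, hxy, rfl, -⟩
  · simpa using h.add_one_s16
  · exact .fuse x y hx hy hxy

theorem limit_from_limit_general (z : ℝ) (hz1 : 1 < z) (hlim : IsLimitFusible z) :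
    ∃ x y : ℝ, Fusible x ∧ Fusible y ∧ |y - x| < 1 ∧ z = (x + y + 1) / 2 ∧
      (IsLimitFusible x ∨ IsLimitFusible y) := by
  rcases hlim.fusible_sub_one_or_exists_fuse fun σ _ hσ => hσ.fusible with hz | h
  · obtain ⟨x, y, hx, hy, -, hxy, hz_eq, -⟩ := hz.exists_fuse_eq (by linarith)
    exact ⟨x + 1, y + 1, hx.add_one_s16, hy.add_one_s16, by simpa using hxy, by linarith,
      .inl hx.isLimitFusible_add_one⟩
  · exact h

theorem limit_from_limit (z : ℝ) (hz : Fusible z) (hz1 : 1 < z) (hlim : IsLimitFusible z) :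
    ∃ x y : ℝ, Fusible x ∧ Fusible y ∧ |y - x| < 1 ∧ z = (x + y + 1) / 2 ∧
      (IsLimitFusible x ∨ IsLimitFusible y) :=
  limit_from_limit_general z hz1 hlim
end
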